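/- Let n ≥ 1 and let L be a positive integer with 2n | L, and set M = L/n (so M is even). Then the rearranged matrix G' defined by G'_{(j−1)M+a, (j'−1)M+b} := G^{(z^n+1)}(L)_{j+(a−1)n, j'+(b−1)n} for j,j' ∈ {1,…,n} and a,b ∈ {1,…,M} is block diagonal: G'_{(j−1)M+a,(j'−1)M+b} = 0 whenever j ≠ j', and for each j the M×M diagonal block with entries G'_{(j−1)M+a,(j−1)M+b} equals G^{(z+1)}(M) if n is odd, and equals D_M G^{(z+1)}(M) D_M if n is even, where D_M is the M×M diagonal matrix with diagonal entries (D_M)_{aa} = (−1)^{a+1}. -/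

import Mathlib

open scoped BigOperators Matrix

/-- `θ_k = (2π/L)(k - 1/2)` for `k = 1, …, L` (here `k : Fin L` is the 0-based index,
so `θ_k = (2π/L)(k + 1/2)`). -/
noncomputable def theta (L : ℕ) (k : Fin L) : ℝ :=
  2 * Real.pi / L * ((k : ℝ) + 1 / 2)

/-- The half-shifted correlation matrix
`G^{(f)}(L)_{nm} = ((-1)^{n-m}/L) Σ_{k=1}^{L} (f(e^{iθ_k})/|f(e^{iθ_k})|) e^{iθ_k (n-m)}`. -/
noncomputable def Gf (L : ℕ) (f : ℂ → ℂ) : Matrix (Fin L) (Fin L) ℂ :=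
  Matrix.of fun n m : Fin L =>
    (-1 : ℂ) ^ ((n : ℤ) - (m : ℤ)) / (L : ℂ) *
      ∑ k : Fin L,
        f (Complex.exp (Complex.I * (theta L k : ℂ))) /
            ((‖f (Complex.exp (Complex.I * (theta L k : ℂ)))‖) : ℂ) *
          Complex.exp (Complex.I * (theta L k : ℂ) * (((n : ℤ) - (m : ℤ) : ℤ) : ℂ))

/-- The site `j + (a-1)·n` (0-based: `j + a·n`) in a chain of length `L = n·M`,
grouping indices by residue classes modulo `n`. -/
def site (n M L : ℕ) (h : n * M = L) (j : Fin n) (a : Fin M) : Fin L :=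
  ⟨(j : ℕ) + (a : ℕ) * n, by
    have h1 : (j : ℕ) + (a : ℕ) * n < ((a : ℕ) + 1) * n := by
      have := j.isLt; nlinarith
    have h2 : ((a : ℕ) + 1) * n ≤ M * n := Nat.mul_le_mul_right n a.isLt
    have h3 : M * n = L := by rw [Nat.mul_comm]; exact h
    exact lt_of_lt_of_le h1 (le_of_le_of_eq h2 h3)⟩

/-!
Write `L = n·M` and the index `k < L` as `c + M·t` with `c < M`, `t < n`. Then
`e^{iθ_k} = ζ^t · e^{iθ_c/n}`, where `ζ = e^{2πi/n}` and `θ_c` are the angles for size `M`, so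
`e^{inθ_k} = e^{iθ_c}`: the symbol `f(zⁿ)` sampled at the `L` points is `f` sampled at the `M`
points, repeated `n` times. In the Fourier sum of entry `(p, q)` the sum over `t` is the root of
unity sum `Σ_t ζ^{t(p-q)}`, equal to `n` if `n ∣ p - q` and to `0` otherwise. Sites in different
residue classes modulo `n` therefore decouple, and within one class `p - q = (a - b)·n`, which
only changes the sign `(-1)^{p-q}`: it is `(-1)^{a-b}` for odd `n` and `1 = (-1)^{a+b}(-1)^{a-b}`
for even `n`.
-/

open Complex Finset

theorem IsPrimitiveRoot.sum_range_zpow_pow {K : Type*} [Field K] {ζ : K} {n : ℕ}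
    (hζ : IsPrimitiveRoot ζ n) (d : ℤ) :
    ∑ t ∈ range n, (ζ ^ d) ^ t = if (n : ℤ) ∣ d then (n : K) else 0 := by
  split_ifs with hd
  · simp [(hζ.zpow_eq_one_iff_dvd d).mpr hd]
  · have hpow : (ζ ^ d) ^ n = 1 := by
      rw [← zpow_natCast, ← zpow_mul, mul_comm, zpow_mul, zpow_natCast, hζ.pow_eq_one, one_zpow]
    rw [geom_sum_eq (mt (hζ.zpow_eq_one_iff_dvd d).mp hd), hpow, sub_self, zero_div]

noncomputable def samplePoint (L : ℕ) (k : Fin L) : ℂ := exp (I * theta L k)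

noncomputable def phaseSum (L : ℕ) (f : ℂ → ℂ) (d : ℤ) : ℂ :=
  ∑ k : Fin L, f (samplePoint L k) / (‖f (samplePoint L k)‖ : ℂ) * samplePoint L k ^ d

theorem Gf_apply (L : ℕ) (f : ℂ → ℂ) (i j : Fin L) :
    Gf L f i j = (-1 : ℂ) ^ ((i : ℤ) - j) / L * phaseSum L f ((i : ℤ) - j) := by
  simp only [Gf, Matrix.of_apply, phaseSum, samplePoint, ← exp_int_mul, mul_comm]

theorem theta_finProdFinEquiv {n M : ℕ} (t : Fin n) (c : Fin M) :
    theta (n * M) (finProdFinEquiv (t, c)) = (theta M c + 2 * Real.pi * t) / n := by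
  have hn : (n : ℝ) ≠ 0 := Nat.cast_ne_zero.mpr (Fin.pos t).ne'
  have hM : (M : ℝ) ≠ 0 := Nat.cast_ne_zero.mpr (Fin.pos c).ne'
  simp only [theta, finProdFinEquiv_apply_val]
  push_cast
  field_simp
  ring

theorem samplePoint_finProdFinEquiv {n M : ℕ} (t : Fin n) (c : Fin M) :
    samplePoint (n * M) (finProdFinEquiv (t, c)) =
      exp (2 * Real.pi * I / n) ^ (t : ℕ) * exp (I * theta M c / n) := by
  rw [samplePoint, theta_finProdFinEquiv, ← exp_nat_mul, ← exp_add]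
  congr 1
  push_cast
  ring

theorem exp_div_natCast_pow (z : ℂ) {n : ℕ} (hn : n ≠ 0) : exp (z / n) ^ n = exp z := by
  rw [← exp_nat_mul, mul_div_cancel₀ _ (Nat.cast_ne_zero.mpr hn)]

theorem samplePoint_finProdFinEquiv_pow {n M : ℕ} (t : Fin n) (c : Fin M) :
    samplePoint (n * M) (finProdFinEquiv (t, c)) ^ n = samplePoint M c := by
  have hn : n ≠ 0 := (Fin.pos t).ne'
  rw [samplePoint_finProdFinEquiv, mul_pow, ← pow_mul, pow_mul', exp_div_natCast_pow _ hn,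
    exp_div_natCast_pow _ hn, exp_two_pi_mul_I, one_pow, one_mul, samplePoint]

theorem phaseSum_comp_pow (n M : ℕ) [NeZero n] (f : ℂ → ℂ) (d : ℤ) :
    phaseSum (n * M) (fun z => f (z ^ n)) d =
      if (n : ℤ) ∣ d then n * phaseSum M f (d / n) else 0 := by
  set ζ := exp (2 * Real.pi * I / n)
  set r := fun c : Fin M => exp (I * theta M c / n)
  set F := fun c : Fin M => f (samplePoint M c) / (‖f (samplePoint M c)‖ : ℂ)
  have hζ : IsPrimitiveRoot ζ n := isPrimitiveRoot_exp n (NeZero.ne n)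
  have hterm : ∀ (t : Fin n) (c : Fin M),
      f (samplePoint (n * M) (finProdFinEquiv (t, c)) ^ n) /
          (‖f (samplePoint (n * M) (finProdFinEquiv (t, c)) ^ n)‖ : ℂ) *
        samplePoint (n * M) (finProdFinEquiv (t, c)) ^ d = F c * r c ^ d * (ζ ^ d) ^ (t : ℕ) := by
    intro t c
    rw [samplePoint_finProdFinEquiv_pow, samplePoint_finProdFinEquiv, mul_zpow, ← zpow_natCast,
      ← zpow_mul, mul_comm (t : ℤ), zpow_mul, zpow_natCast]
    ring
  calc phaseSum (n * M) (fun z => f (z ^ n)) d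
      = ∑ c : Fin M, F c * r c ^ d * ∑ t ∈ range n, (ζ ^ d) ^ t := by
        rw [phaseSum, ← finProdFinEquiv.sum_comp, Fintype.sum_prod_type, Finset.sum_comm]
        simp only [hterm, ← Finset.mul_sum, Fin.sum_univ_eq_sum_range (fun t => (ζ ^ d) ^ t)]
    _ = _ := by
        rw [hζ.sum_range_zpow_pow]
        split_ifs with hd
        · obtain ⟨e, rfl⟩ := hd
          rw [phaseSum, Int.mul_ediv_cancel_left _ (Int.natCast_ne_zero.mpr (NeZero.ne n)),
            Finset.mul_sum]
          refine Finset.sum_congr rfl fun c _ => ?_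
          rw [zpow_mul, zpow_natCast, exp_div_natCast_pow _ (NeZero.ne n)]
          simp only [F, samplePoint]
          ring
        · simp

theorem neg_one_pow_add_mul_neg_one_zpow_sub {K : Type*} [DivisionRing K] (a b : ℕ) :
    (-1 : K) ^ (a + b) * (-1 : K) ^ ((a : ℤ) - b) = 1 := by
  rw [← zpow_natCast, ← zpow_add₀ (neg_ne_zero.mpr one_ne_zero)]
  exact Even.neg_one_zpow ⟨a, by push_cast; ring⟩

theorem site_sub_site {n M L : ℕ} (h : n * M = L) (j j' : Fin n) (a b : Fin M) :
    ((site n M L h j a : ℕ) : ℤ) - (site n M L h j' b : ℕ) =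
      ((j : ℤ) - j') + ((a : ℤ) - b) * n := by
  simp only [site]
  push_cast
  ring

theorem block_reduction_zn_plus_one_general (n L M : ℕ) (hprod : n * M = L) :
    (∀ (j j' : Fin n) (a b : Fin M), j ≠ j' →
      Gf L (fun z => z ^ n + 1) (site n M L hprod j a) (site n M L hprod j' b) = 0) ∧
    (∀ (j : Fin n) (a b : Fin M),
      Gf L (fun z => z ^ n + 1) (site n M L hprod j a) (site n M L hprod j b) =
        if Odd n then Gf M (fun z => z + 1) a b
        else (-1 : ℂ) ^ ((a : ℕ) + (b : ℕ)) * Gf M (fun z => z + 1) a b) := by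
  subst hprod
  refine ⟨fun j j' a b hjj' => ?_, fun j a b => ?_⟩
  · have : NeZero n := ⟨(Fin.pos j).ne'⟩
    have hndvd : ¬ (n : ℤ) ∣ (j : ℤ) - j' + ((a : ℤ) - b) * n := by
      rw [Int.dvd_add_left (dvd_mul_left _ _)]
      intro hdvd
      refine hjj' (Fin.ext ?_)
      have := Int.eq_zero_of_abs_lt_dvd hdvd (abs_sub_lt_iff.mpr ⟨by omega, by omega⟩)
      omega
    rw [Gf_apply, site_sub_site, phaseSum_comp_pow n M (fun z => z + 1), if_neg hndvd, mul_zero]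
  · have : NeZero n := ⟨(Fin.pos j).ne'⟩
    have hn : (n : ℂ) ≠ 0 := Nat.cast_ne_zero.mpr (NeZero.ne n)
    rw [Gf_apply, Gf_apply M, site_sub_site, sub_self, zero_add,
      phaseSum_comp_pow n M (fun z => z + 1), if_pos (dvd_mul_left _ _),
      Int.mul_ediv_cancel _ (Int.natCast_ne_zero.mpr (NeZero.ne n)), mul_comm _ (n : ℤ),
      zpow_mul, zpow_natCast, Nat.cast_mul]
    rcases Nat.even_or_odd n with heven | hodd
    · rw [if_neg (Nat.not_odd_iff_even.mpr heven), heven.neg_one_pow, one_zpow]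
      have hsign := neg_one_pow_add_mul_neg_one_zpow_sub (K := ℂ) a b
      field_simp
      linear_combination (-phaseSum M (fun z => z + 1) ((a : ℤ) - b) / M) * hsign
    · rw [if_pos hodd, hodd.neg_one_pow]
      field_simp

/-- **Mode-pair reduction for `f(z) = zⁿ + 1`.**  Let `n ≥ 1`, `2n ∣ L`,
`M = L/n`.  Rearranging `G^{(zⁿ+1)}(L)` by residue classes mod `n`
(`G'_{(j-1)M+a,(j'-1)M+b} = G_{j+(a-1)n, j'+(b-1)n}`), the result is block
diagonal with `n` identical `M×M` blocks, each equal to `G^{(z+1)}(M)` for odd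
`n` and to `D_M G^{(z+1)}(M) D_M` for even `n`, where `D_M = diag(1,-1,1,…)`. -/
theorem block_reduction_zn_plus_one (n L M : ℕ) (hn : 1 ≤ n) (hL : 0 < L)
    (hdvd : 2 * n ∣ L) (hM : M = L / n) (hprod : n * M = L) :
    (∀ (j j' : Fin n) (a b : Fin M), j ≠ j' →
      Gf L (fun z => z ^ n + 1) (site n M L hprod j a) (site n M L hprod j' b) = 0) ∧
    (∀ (j : Fin n) (a b : Fin M),
      Gf L (fun z => z ^ n + 1) (site n M L hprod j a) (site n M L hprod j b) =
        if Odd n then Gf M (fun z => z + 1) a b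
        else (-1 : ℂ) ^ ((a : ℕ) + (b : ℕ)) * Gf M (fun z => z + 1) a b) :=
  block_reduction_zn_plus_one_general n L M hprod
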